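/- Marginal importance sampling representation of the FQE estimator (identity (7)–(8)). In the deterministic FQE setup described in the context, the plug-in value estimate equals a weighted sum of observed rewards: ν̂ = Σ_{t=1}^T (1/n) Σ_{i=1}^n ŵ_{i,t} · r_{i,t}, where ŵ_{i,t} := vᵀ Ĝ₁ Ĝ₂ ⋯ Ĝ_{t−1} Σ̂_t^{−1} φ(s_{i,t}, a_{i,t}) (the matrix product being the identity when t = 1). -/
import Mathlib


open MeasureTheory Matrix
open scoped BigOperators

noncomputable section

namespace MISrep

variable {S : Type} [MeasurableSpace S] {𝒜 : Type} [Fintype 𝒜] [MeasurableSpace 𝒜]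
variable {m n T : ℕ}

/-- Empirical Gram matrix `Σ̂_t` of the features at time `t`. -/
def SigHat (φ : S × 𝒜 → Fin m → ℝ) (x : Fin n → ℕ → S × 𝒜) (t : ℕ) :
    Matrix (Fin m) (Fin m) ℝ :=
  (n : ℝ)⁻¹ • ∑ i : Fin n, Matrix.vecMulVec (φ (x i t)) (φ (x i t))

/-- The next-state feature vector `ψ_{i,t+1} = ∑_{a'} π_{t+1}(a'∣s_{i,t+1}) φ(s_{i,t+1}, a')`. -/
def ψnext (φ : S × 𝒜 → Fin m → ℝ) (π : ℕ → 𝒜 → S → ℝ) (s' : Fin n → ℕ → S)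
    (i : Fin n) (t : ℕ) : Fin m → ℝ :=
  ∑ a' : 𝒜, π (t + 1) a' (s' i (t + 1)) • φ (s' i (t + 1), a')

/-- The estimated conditional-expectation (transition) matrix
`Ĝ_t = Σ̂_t⁻¹ (1/n) ∑ᵢ φ(x_{i,t}) ψ_{i,t+1}ᵀ`. -/
def Ghat (φ : S × 𝒜 → Fin m → ℝ) (π : ℕ → 𝒜 → S → ℝ)
    (x : Fin n → ℕ → S × 𝒜) (s' : Fin n → ℕ → S) (t : ℕ) :
    Matrix (Fin m) (Fin m) ℝ :=
  (SigHat φ x t)⁻¹ *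
    ((n : ℝ)⁻¹ • ∑ i : Fin n, Matrix.vecMulVec (φ (x i t)) (ψnext φ π s' i t))

/-- The FQE backward recursion: `QhatAux T φ π x s' r k = Q̂_{T+1-k}`, with
`Q̂_{T+1} = 0`. -/
def QhatAux (T : ℕ) (φ : S × 𝒜 → Fin m → ℝ) (π : ℕ → 𝒜 → S → ℝ)
    (x : Fin n → ℕ → S × 𝒜) (s' : Fin n → ℕ → S) (r : Fin n → ℕ → ℝ) :
    ℕ → S × 𝒜 → ℝ
  | 0 => fun _ => 0
  | (k + 1) => fun y =>
      φ y ⬝ᵥ ((SigHat φ x (T - k))⁻¹ *ᵥ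
        ((n : ℝ)⁻¹ • ∑ i : Fin n,
          (r i (T - k) + ∑ a' : 𝒜, π (T - k + 1) a' (s' i (T - k + 1)) *
              QhatAux T φ π x s' r k (s' i (T - k + 1), a')) •
            φ (x i (T - k))))

/-- `Q̂_t`, the FQE estimate of the Q-function at time `t`. -/
def Qhat (T : ℕ) (φ : S × 𝒜 → Fin m → ℝ) (π : ℕ → 𝒜 → S → ℝ)
    (x : Fin n → ℕ → S × 𝒜) (s' : Fin n → ℕ → S) (r : Fin n → ℕ → ℝ)
    (t : ℕ) : S × 𝒜 → ℝ :=
  QhatAux T φ π x s' r (T + 1 - t)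

/-- The product `Ĝ₁ Ĝ₂ ⋯ Ĝ_{t−1}` (the identity matrix when `t = 1`). -/
def Gprod (φ : S × 𝒜 → Fin m → ℝ) (π : ℕ → 𝒜 → S → ℝ)
    (x : Fin n → ℕ → S × 𝒜) (s' : Fin n → ℕ → S) (t : ℕ) :
    Matrix (Fin m) (Fin m) ℝ :=
  ((List.range' 1 (t - 1)).map (Ghat φ π x s')).prod

/-! ### Auxiliary linear-algebra helpers -/

lemma mulVec_sum' {m' : ℕ} {ι : Type*} (s : Finset ι) (A : Matrix (Fin m') (Fin m') ℝ)
    (f : ι → Fin m' → ℝ) : A *ᵥ (∑ i ∈ s, f i) = ∑ i ∈ s, A *ᵥ f i := by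
  funext j
  simp [Matrix.mulVec, dotProduct, Finset.mul_sum, Finset.sum_apply,
    Finset.sum_comm (s := s)]

lemma sum_dotProduct' {m' : ℕ} {ι : Type*} (s : Finset ι) (f : ι → Fin m' → ℝ)
    (v : Fin m' → ℝ) : (∑ i ∈ s, f i) ⬝ᵥ v = ∑ i ∈ s, f i ⬝ᵥ v := by
  simp only [dotProduct, Finset.sum_apply, Finset.sum_mul]
  exact Finset.sum_comm

lemma sum_mulVec' {m' : ℕ} {ι : Type*} (s : Finset ι) (A : ι → Matrix (Fin m') (Fin m') ℝ)
    (v : Fin m' → ℝ) : (∑ i ∈ s, A i) *ᵥ v = ∑ i ∈ s, A i *ᵥ v := by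
  funext j
  have h : (∑ i ∈ s, A i) j = ∑ i ∈ s, A i j := by
    funext y; simp [Matrix.sum_apply]
  show (∑ i ∈ s, A i) j ⬝ᵥ v = _
  rw [h, sum_dotProduct', Finset.sum_apply]
  rfl

lemma dotProduct_sum' {m' : ℕ} {ι : Type*} (s : Finset ι) (v : Fin m' → ℝ)
    (f : ι → Fin m' → ℝ) : v ⬝ᵥ (∑ i ∈ s, f i) = ∑ i ∈ s, v ⬝ᵥ f i := by
  simp [dotProduct, Finset.mul_sum, Finset.sum_apply, Finset.sum_comm (s := s)]

lemma vecMulVec_mulVec' {m' : ℕ} (u w θ : Fin m' → ℝ) :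
    Matrix.vecMulVec u w *ᵥ θ = (w ⬝ᵥ θ) • u := by
  funext j
  simp only [Matrix.mulVec, Matrix.vecMulVec_apply, dotProduct, Pi.smul_apply, smul_eq_mul,
    Finset.sum_mul]
  exact Finset.sum_congr rfl fun k _ => by ring

/-- The coefficient vector `Σ̂_t⁻¹ ((1/n) ∑ᵢ r_{i,t} φ(x_{i,t}))`. -/
def cvec (φ : S × 𝒜 → Fin m → ℝ) (x : Fin n → ℕ → S × 𝒜) (r : Fin n → ℕ → ℝ) (t : ℕ) :
    Fin m → ℝ :=
  (SigHat φ x t)⁻¹ *ᵥ ((n : ℝ)⁻¹ • ∑ i : Fin n, r i t • φ (x i t))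

/-- The coefficient vector of `Q̂_{T+1-k}` in the feature basis. -/
def thetaAux (T : ℕ) (φ : S × 𝒜 → Fin m → ℝ) (π : ℕ → 𝒜 → S → ℝ)
    (x : Fin n → ℕ → S × 𝒜) (s' : Fin n → ℕ → S) (r : Fin n → ℕ → ℝ) :
    ℕ → Fin m → ℝ
  | 0 => 0
  | (k + 1) => cvec φ x r (T - k) + Ghat φ π x s' (T - k) *ᵥ thetaAux T φ π x s' r k

lemma QhatAux_eq_dot (T : ℕ) (φ : S × 𝒜 → Fin m → ℝ) (π : ℕ → 𝒜 → S → ℝ)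
    (x : Fin n → ℕ → S × 𝒜) (s' : Fin n → ℕ → S) (r : Fin n → ℕ → ℝ) :
    ∀ k (y : S × 𝒜), QhatAux T φ π x s' r k y = φ y ⬝ᵥ thetaAux T φ π x s' r k
  | 0, y => by simp [QhatAux, thetaAux]
  | (k + 1), y => by
    have ih := QhatAux_eq_dot T φ π x s' r k
    show φ y ⬝ᵥ _ = φ y ⬝ᵥ _
    congr 1
    set θ := thetaAux T φ π x s' r k with hθ
    have hsum : ∀ i : Fin n,
        (∑ a' : 𝒜, π (T - k + 1) a' (s' i (T - k + 1)) *
          QhatAux T φ π x s' r k (s' i (T - k + 1), a'))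
        = ψnext φ π s' i (T - k) ⬝ᵥ θ := by
      intro i
      rw [ψnext, sum_dotProduct']
      exact Finset.sum_congr rfl fun a' _ => by rw [ih, smul_dotProduct, smul_eq_mul]
    simp only [hsum]
    have hsplit : ∀ i : Fin n,
        (r i (T - k) + ψnext φ π s' i (T - k) ⬝ᵥ θ) • φ (x i (T - k))
        = r i (T - k) • φ (x i (T - k)) +
            (ψnext φ π s' i (T - k) ⬝ᵥ θ) • φ (x i (T - k)) := fun i => add_smul _ _ _
    simp only [hsplit, Finset.sum_add_distrib, smul_add, Matrix.mulVec_add]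
    rw [thetaAux]
    congr 1
    rw [Ghat, ← Matrix.mulVec_mulVec]
    congr 1
    rw [Matrix.smul_mulVec, sum_mulVec', ← hθ]
    simp only [vecMulVec_mulVec']

lemma thetaAux_eq (T : ℕ) (φ : S × 𝒜 → Fin m → ℝ) (π : ℕ → 𝒜 → S → ℝ)
    (x : Fin n → ℕ → S × 𝒜) (s' : Fin n → ℕ → S) (r : Fin n → ℕ → ℝ) :
    ∀ k, k ≤ T → thetaAux T φ π x s' r k =
      ∑ t ∈ Finset.Icc (T + 1 - k) T,
        ((List.range' (T + 1 - k) (t - (T + 1 - k))).map (Ghat φ π x s')).prod *ᵥ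
          cvec φ x r t
  | 0, _ => by
    rw [thetaAux, Finset.Icc_eq_empty (by omega), Finset.sum_empty]
  | (k + 1), hk => by
    have ih := thetaAux_eq T φ π x s' r k (le_of_lt (Nat.lt_of_succ_le hk))
    set G := Ghat φ π x s' with hG
    have hs1 : T + 1 - k = (T - k) + 1 := by omega
    set s := T - k with hsdef
    have hsT : s ≤ T := by omega
    have hins : Finset.Icc s T = insert s (Finset.Icc (s + 1) T) := by
      ext u; simp only [Finset.mem_Icc, Finset.mem_insert]; omega
    have hT1 : T + 1 - (k + 1) = s := by omega
    rw [thetaAux, ih, hs1, hT1, hins, Finset.sum_insert (by simp),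
      Nat.sub_self, List.range'_zero, List.map_nil, List.prod_nil, Matrix.one_mulVec,
      mulVec_sum']
    congr 1
    refine Finset.sum_congr rfl fun t ht => ?_
    have hst : s + 1 ≤ t := (Finset.mem_Icc.mp ht).1
    have hrange : t - s = (t - (s + 1)) + 1 := by omega
    rw [Matrix.mulVec_mulVec, hrange, List.range'_succ, List.map_cons, List.prod_cons]

/-- marginal importance sampling representation of the FQE
estimator.  With deterministic data `(s_{i,t}, a_{i,t}, r_{i,t}, s_{i,t+1})`,
invertible empirical Gram matrices, and initial distribution `ρ` with feature
mean `v = ∫ φ dρ`, the plug-in FQE value estimate `ν̂ = ∫ Q̂₁ dρ` equals the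
weighted sum of rewards `∑_{t=1}^T (1/n) ∑ᵢ ŵ_{i,t} r_{i,t}` with
`ŵ_{i,t} = vᵀ Ĝ₁ ⋯ Ĝ_{t−1} Σ̂_t⁻¹ φ(s_{i,t}, a_{i,t})`. -/
theorem fqe_is_marginal_importance_sampling
    (hn : 0 < n)
    (x : Fin n → ℕ → S × 𝒜)          -- state-action pairs (s_{i,t}, a_{i,t})
    (s' : Fin n → ℕ → S)             -- states, with s' i (t+1) the next state
    (hconsist : ∀ i t, (x i t).1 = s' i t)
    (r : Fin n → ℕ → ℝ)              -- rewards r_{i,t}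
    (φ : S × 𝒜 → Fin m → ℝ) (hφmeas : Measurable φ)
    (π : ℕ → 𝒜 → S → ℝ)
    (hπ0 : ∀ t a s, 0 ≤ π t a s) (hπ1 : ∀ t s, ∑ a, π t a s = 1)
    (ρ : Measure (S × 𝒜)) [IsProbabilityMeasure ρ]
    (hφint : ∀ k, Integrable (fun y => φ y k) ρ)
    (hinv : ∀ t ∈ Finset.Icc 1 T, IsUnit (SigHat (n := n) φ x t).det)
    (v : Fin m → ℝ) (hv : v = fun k => ∫ y, φ y k ∂ρ) :
    ∫ y, Qhat T φ π x s' r 1 y ∂ρ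
      = ∑ t ∈ Finset.Icc 1 T, (n : ℝ)⁻¹ * ∑ i : Fin n,
          (v ⬝ᵥ (Gprod φ π x s' t *ᵥ ((SigHat φ x t)⁻¹ *ᵥ φ (x i t)))) * r i t := by
  set θ := thetaAux T φ π x s' r T with hθ
  have hQ : ∀ y, Qhat T φ π x s' r 1 y = φ y ⬝ᵥ θ := by
    intro y
    rw [Qhat, show T + 1 - 1 = T from by omega, QhatAux_eq_dot]
  have hint : ∫ y, Qhat T φ π x s' r 1 y ∂ρ = v ⬝ᵥ θ := by
    simp_rw [hQ, dotProduct]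
    rw [integral_finset_sum _ fun k _ => (hφint k).mul_const _]
    exact Finset.sum_congr rfl fun k _ => by rw [integral_mul_const, hv]
  rw [hint, hθ, thetaAux_eq T φ π x s' r T le_rfl,
    show T + 1 - T = 1 from by omega, dotProduct_sum']
  refine Finset.sum_congr rfl fun t _ => ?_
  have hGp : ((List.range' 1 (t - 1)).map (Ghat φ π x s')).prod = Gprod φ π x s' t := rfl
  rw [hGp, cvec, Matrix.mulVec_smul, Matrix.mulVec_smul, dotProduct_smul, smul_eq_mul,
    mulVec_sum', mulVec_sum', dotProduct_sum']
  congr 1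
  refine Finset.sum_congr rfl fun i _ => ?_
  rw [Matrix.mulVec_smul, Matrix.mulVec_smul, dotProduct_smul, smul_eq_mul, mul_comm]

end MISrep
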